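/- Fix μ and δ with 0 ≤ δ and μ ± δ ∈ [0,1], an even population size N, and n ≥ 1 with 2n + 2 ≤ N. Let X ~ Binomial(n, μ+δ) and Y ~ Binomial(n, μ−δ) be independent and set S_n := X − Y. Then e_n(μ,δ) − e_{n+1}(μ,δ) = δ·P(S_n = 0), and consequently η(2n, μ+δ, μ−δ) = 2·e_n(μ,δ) + δ·(N − 2n − 2)·P(S_n = 0). -/
import Mathlib


open Finset

/-- Binomial pmf: probability that `Binomial(n, p)` equals `k`. -/
noncomputable def binomPMF (n : ℕ) (p : ℝ) (k : ℕ) : ℝ :=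
  (n.choose k : ℝ) * p ^ k * (1 - p) ^ (n - k)

/-- `P(X < Y)` for independent `X ~ Binomial(n, p)` and `Y ~ Binomial(n, q)`. -/
noncomputable def probLT (n : ℕ) (p q : ℝ) : ℝ :=
  ∑ i ∈ Finset.range (n + 1), ∑ j ∈ Finset.range (n + 1),
    if i < j then binomPMF n p i * binomPMF n q j else 0

/-- `P(X = Y)` for independent `X ~ Binomial(n, p)` and `Y ~ Binomial(n, q)`. -/
noncomputable def probEQ (n : ℕ) (p q : ℝ) : ℝ :=
  ∑ i ∈ Finset.range (n + 1), binomPMF n p i * binomPMF n q i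

/-- `P(X > Y)` for independent `X ~ Binomial(n, p)` and `Y ~ Binomial(n, q)`. -/
noncomputable def probGT (n : ℕ) (p q : ℝ) : ℝ :=
  ∑ i ∈ Finset.range (n + 1), ∑ j ∈ Finset.range (n + 1),
    if j < i then binomPMF n p i * binomPMF n q j else 0

/-- Tie-adjusted rollout error probability `e(m, μ1, μ0)` of the empirical success
rule, for a matched-pairs experiment of even size `m` with `n = m/2` observations
per arm. -/
noncomputable def errProb (m : ℕ) (μ1 μ0 : ℝ) : ℝ :=
  if μ0 < μ1 then probLT (m / 2) μ1 μ0 + (1 / 2) * probEQ (m / 2) μ1 μ0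
  else if μ1 = μ0 then 1 / 2
  else probGT (m / 2) μ1 μ0 + (1 / 2) * probEQ (m / 2) μ1 μ0

/-- The marginal cost–benefit ratio `η(m, μ1, μ0)` for population size `N`. -/
noncomputable def eta (N m : ℕ) (μ1 μ0 : ℝ) : ℝ :=
  ((N : ℝ) - (m : ℝ)) * errProb m μ1 μ0 - ((N : ℝ) - (m : ℝ) - 2) * errProb (m + 2) μ1 μ0

lemma binomPMF_top (n : ℕ) (p : ℝ) : binomPMF n p (n+1) = 0 := by
  simp [binomPMF, Nat.choose_succ_self]

lemma pascalPMF (n : ℕ) (p : ℝ) (i : ℕ) :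
    binomPMF (n+1) p (i+1) = p * binomPMF n p i + (1-p) * binomPMF n p (i+1) := by
  unfold binomPMF
  rcases lt_trichotomy i n with h | h | h
  · have h1 : n - i = (n - (i+1)) + 1 := by omega
    have h2 : n + 1 - (i+1) = n - i := by omega
    rw [h2, h1, Nat.choose_succ_succ]
    push_cast
    ring
  · subst h
    simp [Nat.choose_succ_self, Nat.choose_self]
    ring
  · have h1 : n.choose i = 0 := Nat.choose_eq_zero_of_lt h
    have h2 : n.choose (i+1) = 0 := Nat.choose_eq_zero_of_lt (by omega)
    have h3 : (n+1).choose (i+1) = 0 := Nat.choose_eq_zero_of_lt (by omega)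
    simp [h1, h2, h3]

lemma convPMF (n : ℕ) (p : ℝ) (g : ℕ → ℝ) :
    ∑ i ∈ range (n+2), binomPMF (n+1) p i * g i
      = ∑ i ∈ range (n+1), binomPMF n p i * ((1-p) * g i + p * g (i+1)) := by
  have key : (∑ i ∈ range (n+1), (1-p) * (binomPMF n p (i+1) * g (i+1)))
      + (1-p) * (binomPMF n p 0 * g 0)
      = ∑ i ∈ range (n+1), (1-p) * (binomPMF n p i * g i) := by
    rw [← Finset.sum_range_succ' (fun i => (1-p) * (binomPMF n p i * g i)) (n+1),
      Finset.sum_range_succ]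
    simp [binomPMF_top]
  have e0 : binomPMF (n+1) p 0 = (1-p) * binomPMF n p 0 := by
    simp [binomPMF]
    ring
  rw [Finset.sum_range_succ' (fun i => binomPMF (n+1) p i * g i) (n+1)]
  have hsplitR : ∑ i ∈ range (n+1), binomPMF n p i * ((1-p) * g i + p * g (i+1))
      = (∑ i ∈ range (n+1), (1-p) * (binomPMF n p i * g i))
        + ∑ i ∈ range (n+1), p * (binomPMF n p i * g (i+1)) := by
    rw [← Finset.sum_add_distrib]
    exact Finset.sum_congr rfl fun i _ => by ring
  rw [hsplitR, ← key, e0]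
  rw [add_assoc, add_comm ((1-p) * (binomPMF n p 0 * g 0)), ← add_assoc,
    ← Finset.sum_add_distrib]
  congr 1
  · exact Finset.sum_congr rfl fun i _ => by rw [pascalPMF]; ring
  · ring


noncomputable def wfun (i j : ℕ) : ℝ := if i < j then 1 else if i = j then 1/2 else 0

lemma T_eq (n : ℕ) (p q : ℝ) :
    probLT n p q + (1/2) * probEQ n p q
      = ∑ i ∈ range (n+1), ∑ j ∈ range (n+1),
          binomPMF n p i * binomPMF n q j * wfun i j := by
  unfold probLT probEQ
  rw [Finset.mul_sum, ← Finset.sum_add_distrib]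
  refine Finset.sum_congr rfl fun i hi => ?_
  have hdiag : (1/2 : ℝ) * (binomPMF n p i * binomPMF n q i)
      = ∑ j ∈ range (n+1), if i = j then (1/2) * (binomPMF n p i * binomPMF n q j) else 0 := by
    rw [Finset.sum_ite_eq]
    simp [Finset.mem_range.mpr (Finset.mem_range.mp hi)]
  rw [hdiag, ← Finset.sum_add_distrib]
  refine Finset.sum_congr rfl fun j hj => ?_
  unfold wfun
  split_ifs <;> first | omega | ring

noncomputable def Hf (p q : ℝ) (i j : ℕ) : ℝ :=
  (1-p)*((1-q)*wfun i j + q*wfun i (j+1)) + p*((1-q)*wfun (i+1) j + q*wfun (i+1) (j+1))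

lemma S'_eq (n : ℕ) (p q : ℝ) :
    ∑ i ∈ range (n+2), ∑ j ∈ range (n+2),
        binomPMF (n+1) p i * binomPMF (n+1) q j * wfun i j
      = ∑ i ∈ range (n+1), ∑ j ∈ range (n+1),
          binomPMF n p i * binomPMF n q j * Hf p q i j := by
  have h1 : ∑ i ∈ range (n+2), ∑ j ∈ range (n+2),
      binomPMF (n+1) p i * binomPMF (n+1) q j * wfun i j
      = ∑ i ∈ range (n+2), binomPMF (n+1) p i *
          (∑ j ∈ range (n+2), binomPMF (n+1) q j * wfun i j) := by
    refine Finset.sum_congr rfl fun i _ => ?_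
    rw [Finset.mul_sum]
    exact Finset.sum_congr rfl fun j _ => by ring
  rw [h1, convPMF n p (fun i => ∑ j ∈ range (n+2), binomPMF (n+1) q j * wfun i j)]
  refine Finset.sum_congr rfl fun i _ => ?_
  rw [convPMF n q (fun j => wfun i j), convPMF n q (fun j => wfun (i+1) j)]
  have e1 : ∀ (S1 S2 : ℝ), binomPMF n p i * ((1-p)*S1 + p*S2)
      = binomPMF n p i * (1-p) * S1 + binomPMF n p i * p * S2 := fun _ _ => by ring
  rw [e1, Finset.mul_sum, Finset.mul_sum, ← Finset.sum_add_distrib]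
  refine Finset.sum_congr rfl fun j _ => ?_
  unfold Hf
  ring

lemma wfun_lt {i j : ℕ} (h : i < j) : wfun i j = 1 := by
  unfold wfun; rw [if_pos h]

lemma wfun_diag {i j : ℕ} (h : i = j) : wfun i j = 1/2 := by
  unfold wfun; rw [if_neg (by omega), if_pos h]

lemma wfun_gt {i j : ℕ} (h : j < i) : wfun i j = 0 := by
  unfold wfun; rw [if_neg (by omega), if_neg (by omega)]

lemma wH (p q : ℝ) (i j : ℕ) :
    wfun i j - Hf p q i j
      = (p*(1-q)/2) * ((if j = i then (1:ℝ) else 0) + (if j = i+1 then (1:ℝ) else 0))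
        - (q*(1-p)/2) * ((if j = i then (1:ℝ) else 0) + (if j + 1 = i then (1:ℝ) else 0)) := by
  unfold Hf
  rcases (show j + 2 ≤ i ∨ j + 1 = i ∨ j = i ∨ j = i + 1 ∨ i + 2 ≤ j by omega) with h|h|h|h|h
  · rw [wfun_gt (by omega), wfun_gt (by omega), wfun_gt (by omega), wfun_gt (by omega),
      if_neg (by omega), if_neg (by omega), if_neg (by omega)]
    ring
  · subst h
    rw [wfun_gt (by omega), wfun_diag rfl, wfun_gt (by omega), wfun_gt (by omega),
      if_neg (by omega), if_neg (by omega), if_pos rfl]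
    ring
  · subst h
    rw [wfun_diag rfl, wfun_lt (by omega), wfun_gt (by omega), wfun_diag rfl,
      if_pos rfl, if_neg (by omega), if_neg (by omega)]
    ring
  · subst h
    rw [wfun_lt (by omega), wfun_lt (by omega), wfun_diag rfl, wfun_lt (by omega),
      if_neg (by omega), if_pos rfl, if_neg (by omega)]
    ring
  · rw [wfun_lt (by omega), wfun_lt (by omega), wfun_lt (by omega), wfun_lt (by omega),
      if_neg (by omega), if_neg (by omega), if_neg (by omega)]
    ring

lemma xch (n k : ℕ) (hk : k < n) (p q : ℝ) :
    p*(1-q) * (binomPMF n p k * binomPMF n q (k+1))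
      = q*(1-p) * (binomPMF n p (k+1) * binomPMF n q k) := by
  unfold binomPMF
  obtain ⟨m, hm⟩ : ∃ m, n - k = m + 1 := ⟨n - k - 1, by omega⟩
  have h2 : n - (k+1) = m := by omega
  rw [hm, h2]
  ring

lemma Tdiff (n : ℕ) (p q : ℝ) :
    (probLT n p q + (1/2) * probEQ n p q) - (probLT (n+1) p q + (1/2) * probEQ (n+1) p q)
      = ((p - q)/2) * probEQ n p q := by
  rw [T_eq n p q, T_eq (n+1) p q, S'_eq n p q, ← Finset.sum_sub_distrib]
  have step1 : ∀ i ∈ range (n+1),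
      (∑ j ∈ range (n+1), binomPMF n p i * binomPMF n q j * wfun i j)
        - (∑ j ∈ range (n+1), binomPMF n p i * binomPMF n q j * Hf p q i j)
      = ∑ j ∈ range (n+1),
          ((if j = i then (p*(1-q)/2) * (binomPMF n p i * binomPMF n q j) else 0)
           + (if j = i+1 then (p*(1-q)/2) * (binomPMF n p i * binomPMF n q j) else 0)
           - (if j = i then (q*(1-p)/2) * (binomPMF n p i * binomPMF n q j) else 0)
           - (if j + 1 = i then (q*(1-p)/2) * (binomPMF n p i * binomPMF n q j) else 0)) := by
    intro i _
    rw [← Finset.sum_sub_distrib]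
    refine Finset.sum_congr rfl fun j _ => ?_
    have hw := wH p q i j
    calc binomPMF n p i * binomPMF n q j * wfun i j
          - binomPMF n p i * binomPMF n q j * Hf p q i j
        = binomPMF n p i * binomPMF n q j * (wfun i j - Hf p q i j) := by ring
      _ = _ := by rw [hw]; split_ifs <;> ring
  rw [Finset.sum_congr rfl step1]
  simp only [Finset.sum_sub_distrib, Finset.sum_add_distrib]
  set Em := ∑ i ∈ range (n+1),
      (if i + 1 < n + 1 then binomPMF n p i * binomPMF n q (i+1) else 0) with hEm
  set Ep := ∑ j ∈ range (n+1),
      (if j + 1 < n + 1 then binomPMF n p (j+1) * binomPMF n q j else 0) with hEp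
  have hA : ∀ (c : ℝ), ∑ i ∈ range (n+1), ∑ j ∈ range (n+1),
      (if j = i then c * (binomPMF n p i * binomPMF n q j) else 0) = c * probEQ n p q := by
    intro c
    rw [probEQ, Finset.mul_sum]
    refine Finset.sum_congr rfl fun i hi => ?_
    rw [Finset.sum_ite_eq' (range (n+1)) i (fun j => c * (binomPMF n p i * binomPMF n q j))]
    simp [hi]
  have hB : ∑ i ∈ range (n+1), ∑ j ∈ range (n+1),
      (if j = i+1 then (p*(1-q)/2) * (binomPMF n p i * binomPMF n q j) else 0)
      = (p*(1-q)/2) * Em := by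
    rw [hEm, Finset.mul_sum]
    refine Finset.sum_congr rfl fun i _ => ?_
    rw [Finset.sum_ite_eq' (range (n+1)) (i+1)
      (fun j => (p*(1-q)/2) * (binomPMF n p i * binomPMF n q j))]
    simp only [Finset.mem_range, mul_ite, mul_zero]
  have hD : ∑ i ∈ range (n+1), ∑ j ∈ range (n+1),
      (if j + 1 = i then (q*(1-p)/2) * (binomPMF n p i * binomPMF n q j) else 0)
      = (q*(1-p)/2) * Ep := by
    rw [Finset.sum_comm, hEp, Finset.mul_sum]
    refine Finset.sum_congr rfl fun j _ => ?_
    rw [Finset.sum_ite_eq (range (n+1)) (j+1)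
      (fun i => (q*(1-p)/2) * (binomPMF n p i * binomPMF n q j))]
    simp only [Finset.mem_range, mul_ite, mul_zero]
  have hxch : p*(1-q) * Em = q*(1-p) * Ep := by
    rw [hEm, hEp, Finset.mul_sum, Finset.mul_sum]
    refine Finset.sum_congr rfl fun k _ => ?_
    by_cases h : k + 1 < n + 1
    · rw [if_pos h, if_pos h]
      exact xch n k (by omega) p q
    · rw [if_neg h, if_neg h, mul_zero, mul_zero]
  rw [hA, hB, hA, hD]
  linear_combination (1/2) * hxch


/-- Exact identity for the Bernoulli marginal ratio: in the centered
parametrization `μ1 = μ + δ`, `μ0 = μ − δ`, writing `e_n(μ,δ) = e(2n, μ+δ, μ−δ)`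
and `P(S_n = 0)` for the probability that the two binomial counts tie,
`e_n − e_{n+1} = δ · P(S_n = 0)` and
`η(2n, μ+δ, μ−δ) = 2 e_n + δ (N − 2n − 2) P(S_n = 0)`. -/
theorem exact_identity_marginal_ratio
    (N n : ℕ) (hN : Even N) (hn : 1 ≤ n) (hnN : 2 * n + 2 ≤ N)
    (μ δ : ℝ) (hδ : 0 ≤ δ) (hlo : 0 ≤ μ - δ) (hhi : μ + δ ≤ 1) :
    errProb (2 * n) (μ + δ) (μ - δ) - errProb (2 * n + 2) (μ + δ) (μ - δ)
        = δ * probEQ n (μ + δ) (μ - δ) ∧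
      eta N (2 * n) (μ + δ) (μ - δ)
        = 2 * errProb (2 * n) (μ + δ) (μ - δ)
            + δ * ((N : ℝ) - 2 * (n : ℝ) - 2) * probEQ n (μ + δ) (μ - δ) := by
  have h2 : 2 * n / 2 = n := by omega
  have h3 : (2 * n + 2) / 2 = n + 1 := by omega
  have h1 : errProb (2*n) (μ+δ) (μ-δ) - errProb (2*n+2) (μ+δ) (μ-δ)
      = δ * probEQ n (μ+δ) (μ-δ) := by
    rcases eq_or_lt_of_le hδ with hδ0 | hδ0
    · subst hδ0
      simp [errProb]
    · have hlt : μ - δ < μ + δ := by linarith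
      rw [errProb, errProb, if_pos hlt, if_pos hlt, h2, h3]
      linear_combination Tdiff n (μ+δ) (μ-δ)
  refine ⟨h1, ?_⟩
  rw [eta]
  push_cast
  linear_combination ((N:ℝ) - 2*(n:ℝ) - 2) * h1
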